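/- Let G be an n-vertex graph with adjacency eigenvalues λ₁ ≥ … ≥ λₙ, and let 0 < γ < q < 1. Suppose Σ_{λᵢ>0} λᵢ ≤ n^{1+γ} and that S_T² ≤ 4n·S_{T²/(2n)} for every T ≥ 2n^{1−q}. Then for every κ ∈ [0,1], Σ_{0 ≤ λᵢ ≤ κn} λᵢ² ≤ 50·κ^{1−γ/q}·n². -/

import Mathlib

/-!
Write `S_T` for the mass of the eigenvalues `≥ T` and `ε = 1 - γ/q`. The recursion sends the
threshold `2n·w` to `2n·w²`, so along `w_k = (n^(-2q))^(1/2^k)` (for which `w_{k+1}² = w_k` and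
`2n·w_1 = 2n^(1-q)`) it can be iterated down to `w_0`, where `S ≤ n^(1+γ)`; this gives
`S_{2n·w_k} ≤ 4n·w_{k+1}^(-γ/q)`. Cut `[0, κn]` at the thresholds `2n·w_k ≤ κn`: the part below
`2n·w_0` contributes at most `2n·w_0·n^(1+γ)`, the band `[2n·w_k, 2n·w_{k+1})` at most
`2n·w_{k+1}·S_{2n·w_k} ≤ 8n²·w_{k+1}^ε`, and the top band at most `κn·S`. As `w_k^ε` squares at
each step down, the band terms add up to at most twice the largest one, so the total is
`O((κ/2)^ε n²)` when `(κ/2)^ε ≤ 1/2`; otherwise the bound `∑ λᵢ² = tr A² = 2|E| ≤ n²` suffices.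
-/

open Finset

theorem Matrix.IsHermitian.trace_mul_self {𝕜 n : Type*} [RCLike 𝕜] [Fintype n] [DecidableEq n]
    {A : Matrix n n 𝕜} (hA : A.IsHermitian) :
    (A * A).trace = ∑ i, ((hA.eigenvalues i ^ 2 : ℝ) : 𝕜) := by
  conv_lhs => rw [hA.spectral_theorem, ← map_mul, Unitary.conjStarAlgAut_apply,
    Matrix.trace_mul_cycle, ← mul_assoc, Unitary.coe_star_mul_self, one_mul,
    Matrix.diagonal_mul_diagonal, Matrix.trace_diagonal]
  simp [sq]

theorem SimpleGraph.sum_eigenvalues_sq_le {V : Type*} [Fintype V] [DecidableEq V]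
    (G : SimpleGraph V) [DecidableRel G.Adj] (hA : (G.adjMatrix ℝ).IsHermitian) :
    ∑ i, hA.eigenvalues i ^ 2 ≤ (Fintype.card V : ℝ) ^ 2 := by
  have htr := hA.trace_mul_self
  simp only [RCLike.ofReal_real_eq_id, id, Matrix.trace, Matrix.diag,
    adjMatrix_mul_self_apply_self] at htr
  calc ∑ i, hA.eigenvalues i ^ 2 = ∑ i, (G.degree i : ℝ) := htr.symm
    _ ≤ ∑ _i : V, (Fintype.card V : ℝ) :=
      sum_le_sum fun i _ => by exact_mod_cast (G.degree_lt_card_verts i).le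
    _ = (Fintype.card V : ℝ) ^ 2 := by simp [sq]

lemma le_of_sq_succ_le {s r : ℕ → ℝ} (hr0 : ∀ k, 0 ≤ r k) (hr : ∀ k, r k ≤ r (k + 1) ^ 2)
    (hs : ∀ k, s (k + 1) ^ 2 ≤ s k) (h0 : s 0 ≤ r 0) (k : ℕ) : s k ≤ r k := by
  induction k with
  | zero => exact h0
  | succ k ih =>
    exact (le_abs_self _).trans
      (abs_le_of_sq_le_sq ((hs k).trans (ih.trans (hr k))) (hr0 (k + 1)))

lemma sum_range_le_two_mul {v : ℕ → ℝ} (hv0 : ∀ k, 0 ≤ v k) (hv : ∀ k, v k ≤ v (k + 1) ^ 2)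
    {K : ℕ} (hK : v K ≤ 1 / 2) : ∑ k ∈ range K, v (k + 1) ≤ 2 * v K := by
  induction K with
  | zero => simpa using hv0 0
  | succ K ih =>
    have hvK := hv K
    rw [sum_range_succ]
    nlinarith [ih (by nlinarith [hv0 (K + 1)]), hv0 (K + 1)]

noncomputable def rootSeq (x : ℝ) (k : ℕ) : ℝ := x ^ ((2 ^ k : ℝ)⁻¹)

section

variable {x : ℝ}

@[simp] lemma rootSeq_zero : rootSeq x 0 = x := by simp [rootSeq]

lemma rootSeq_pos (hx : 0 < x) (k : ℕ) : 0 < rootSeq x k := Real.rpow_pos_of_pos hx _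

lemma rootSeq_succ_sq (hx : 0 ≤ x) (k : ℕ) : rootSeq x (k + 1) ^ 2 = rootSeq x k := by
  rw [rootSeq, rootSeq, ← Real.rpow_natCast, ← Real.rpow_mul hx, pow_succ]
  congr 1
  push_cast
  ring

lemma rootSeq_rpow (hx : 0 ≤ x) (y : ℝ) (k : ℕ) : rootSeq (x ^ y) k = rootSeq x k ^ y := by
  rw [rootSeq, rootSeq, ← Real.rpow_mul hx, ← Real.rpow_mul hx, mul_comm]

lemma rootSeq_rpow_eq_rootSeq_succ_rpow {N : ℝ} (hN : 0 < N) (γ : ℝ) {q : ℝ} (hq : q ≠ 0)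
    (k : ℕ) : rootSeq (N ^ γ) k = rootSeq (N ^ (-(2 * q))) (k + 1) ^ (-(γ / q)) := by
  simp only [rootSeq, ← Real.rpow_mul hN.le]
  congr 1
  field_simp
  ring

lemma monotone_rootSeq (hx0 : 0 ≤ x) (hx1 : x ≤ 1) : Monotone (rootSeq x) := by
  refine monotone_nat_of_le_succ fun k => ?_
  have h0 : 0 ≤ rootSeq x (k + 1) := Real.rpow_nonneg hx0 _
  have h1 : rootSeq x (k + 1) ≤ 1 := Real.rpow_le_one hx0 hx1 (by positivity)
  rw [← rootSeq_succ_sq hx0]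
  nlinarith

lemma exists_lt_rootSeq (hx : 0 < x) {y : ℝ} (hy : y < 1) : ∃ k, y < rootSeq x k := by
  have hexp : Filter.Tendsto (fun k : ℕ => ((2 : ℝ) ^ k)⁻¹) Filter.atTop (nhds 0) :=
    tendsto_inv_atTop_zero.comp (tendsto_pow_atTop_atTop_of_one_lt one_lt_two)
  have hlim := ((Real.continuousAt_const_rpow (b := 0) hx.ne').tendsto).comp hexp
  rw [Real.rpow_zero] at hlim
  exact (hlim.eventually (lt_mem_nhds hy)).exists

end

lemma exists_le_and_lt_succ {α : Type*} [LinearOrder α] {w : ℕ → α} {y : α} (h0 : w 0 ≤ y)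
    (h : ∃ k, y < w k) : ∃ K, w K ≤ y ∧ y < w (K + 1) := by
  by_contra! hne
  obtain ⟨k, hk⟩ := h
  have hle : ∀ k, w k ≤ y := fun k => Nat.rec h0 (fun k ih => hne k ih) k
  exact (hle k).not_gt hk

lemma mul_rpow_le_rpow_one_sub {N q γ y : ℝ} (hN : 0 < N) (hq : 0 < q) (hγ : 0 ≤ γ)
    (hy0 : 0 ≤ y) (hy : y ≤ N ^ (-q)) : y * N ^ γ ≤ y ^ (1 - γ / q) := by
  have hyγ : y ^ (γ / q) ≤ N ^ (-γ) := by
    refine (Real.rpow_le_rpow hy0 hy (by positivity)).trans_eq ?_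
    rw [← Real.rpow_mul hN.le]
    congr 1
    field_simp
  calc y * N ^ γ = y ^ (1 - γ / q) * (y ^ (γ / q) * N ^ γ) := by
        rw [← mul_assoc, ← Real.rpow_add' hy0 (by norm_num), sub_add_cancel, Real.rpow_one]
    _ ≤ y ^ (1 - γ / q) * (N ^ (-γ) * N ^ γ) := by gcongr
    _ = y ^ (1 - γ / q) := by rw [← Real.rpow_add hN, neg_add_cancel, Real.rpow_zero, mul_one]

section

variable {ι : Type*}

lemma sum_sq_le_mul_sum {a : ι → ℝ} {s : Finset ι} {b : ℝ} (h : ∀ i ∈ s, 0 ≤ a i ∧ a i ≤ b) :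
    ∑ i ∈ s, a i ^ 2 ≤ b * ∑ i ∈ s, a i := by
  rw [mul_sum]
  refine sum_le_sum fun i hi => ?_
  obtain ⟨h0, hb⟩ := h i hi
  nlinarith

variable [Fintype ι]

/-- `upperMass a T` is the paper's `S_T`. -/
noncomputable def upperMass (a : ι → ℝ) (T : ℝ) : ℝ := ∑ i ∈ univ.filter (fun i => T ≤ a i), a i

noncomputable def positiveMass (a : ι → ℝ) : ℝ := ∑ i ∈ univ.filter (fun i => 0 < a i), a i

def MassRecursion (a : ι → ℝ) (N q : ℝ) : Prop :=
  ∀ T : ℝ, 2 * N ^ (1 - q) ≤ T → upperMass a T ^ 2 ≤ 4 * N * upperMass a (T ^ 2 / (2 * N))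

variable {a : ι → ℝ}

lemma sum_le_positiveMass (s : Finset ι) : ∑ i ∈ s, a i ≤ positiveMass a := by
  rw [← sum_filter_add_sum_filter_not s (fun i => 0 < a i)]
  have hpos : ∑ i ∈ s.filter (fun i => 0 < a i), a i ≤ positiveMass a :=
    sum_le_sum_of_subset_of_nonneg (filter_subset_filter _ (subset_univ s))
      fun i hi _ => (mem_filter.1 hi).2.le
  have hnonpos : ∑ i ∈ s.filter (fun i => ¬ 0 < a i), a i ≤ 0 :=
    sum_nonpos fun i hi => not_lt.1 (mem_filter.1 hi).2
  linarith

lemma sum_sq_filter_le_Ico_add_mul_upperMass {p : ℝ → Prop} [DecidablePred p] {T b : ℝ}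
    (hT : 0 ≤ T) (hb : 0 ≤ b) (hpb : ∀ x, p x → x ≤ b) (hTp : ∀ x, x < T → p x) :
    ∑ i ∈ univ.filter (fun i => 0 ≤ a i ∧ p (a i)), a i ^ 2 ≤
      ∑ i ∈ univ.filter (fun i => 0 ≤ a i ∧ a i < T), a i ^ 2 + b * upperMass a T := by
  rw [← sum_filter_add_sum_filter_not _ (fun i => a i < T), filter_filter, filter_filter]
  refine add_le_add (congrArg (∑ i ∈ ·, a i ^ 2) (filter_congr fun i _ => ?_)).le ?_
  · exact ⟨fun h => ⟨h.1.1, h.2⟩, fun h => ⟨⟨h.1, hTp _ h.2⟩, h.2⟩⟩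
  · refine (sum_sq_le_mul_sum fun i hi => ?_).trans (mul_le_mul_of_nonneg_left ?_ hb)
    · have hi := (mem_filter.1 hi).2
      exact ⟨hi.1.1, hpb _ hi.1.2⟩
    · exact sum_le_sum_of_subset_of_nonneg
        (fun i hi => mem_filter.2 ⟨mem_univ i, not_lt.1 (mem_filter.1 hi).2.2⟩)
        fun i hi _ => hT.trans (mem_filter.1 hi).2

lemma sum_sq_filter_Ico_le {t : ℕ → ℝ} (ht : Monotone t) (ht0 : 0 ≤ t 0) (K : ℕ) :
    ∑ i ∈ univ.filter (fun i => 0 ≤ a i ∧ a i < t K), a i ^ 2 ≤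
      t 0 * positiveMass a + ∑ k ∈ range K, t (k + 1) * upperMass a (t k) := by
  induction K with
  | zero =>
    rw [range_zero, sum_empty, add_zero]
    refine (sum_sq_le_mul_sum fun i hi => ?_).trans
      (mul_le_mul_of_nonneg_left (sum_le_positiveMass _) ht0)
    have hi := (mem_filter.1 hi).2
    exact ⟨hi.1, hi.2.le⟩
  | succ K ih =>
    have hK := sum_sq_filter_le_Ico_add_mul_upperMass (a := a) (p := (· < t (K + 1)))
      (ht0.trans (ht K.zero_le)) (ht0.trans (ht (K + 1).zero_le)) (fun _ hx => hx.le)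
      (fun _ hx => hx.trans_le (ht K.le_succ))
    rw [sum_range_succ]
    linarith

lemma sum_sq_filter_Icc_le {t : ℕ → ℝ} (ht : Monotone t) (ht0 : 0 ≤ t 0) {K : ℕ} {c : ℝ}
    (hc : t K ≤ c) :
    ∑ i ∈ univ.filter (fun i => 0 ≤ a i ∧ a i ≤ c), a i ^ 2 ≤
      t 0 * positiveMass a + ∑ k ∈ range K, t (k + 1) * upperMass a (t k) +
        c * upperMass a (t K) := by
  have hK := sum_sq_filter_le_Ico_add_mul_upperMass (a := a) (p := (· ≤ c))
    (ht0.trans (ht K.zero_le)) ((ht0.trans (ht K.zero_le)).trans hc) (fun _ hx => hx)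
    (fun _ hx => hx.le.trans hc)
  linarith [sum_sq_filter_Ico_le (a := a) ht ht0 K]

lemma upperMass_rootSeq_le {N γ q : ℝ} (hN : 1 ≤ N) (hq : 0 < q)
    (hpos : positiveMass a ≤ N ^ (1 + γ)) (hrec : MassRecursion a N q) (k : ℕ) :
    upperMass a (2 * N * rootSeq (N ^ (-(2 * q))) k) ≤
      4 * N * rootSeq (N ^ (-(2 * q))) (k + 1) ^ (-(γ / q)) := by
  have hN0 : 0 < N := one_pos.trans_le hN
  have hx0 : 0 ≤ N ^ (-(2 * q)) := Real.rpow_nonneg hN0.le _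
  have hx1 : N ^ (-(2 * q)) ≤ 1 := Real.rpow_le_one_of_one_le_of_nonpos hN (by linarith)
  set w := rootSeq (N ^ (-(2 * q)))
  set s := fun k => upperMass a (2 * N * w k) / (4 * N)
  have hw_sq : ∀ k, w (k + 1) ^ 2 = w k := rootSeq_succ_sq hx0
  have hw1 : N ^ (1 - q) = N * w 1 := by
    rw [Real.rpow_sub hN0, Real.rpow_one, div_eq_mul_inv, ← Real.rpow_neg hN0.le]
    simp only [w, rootSeq, ← Real.rpow_mul hN0.le]
    congr 2
    ring
  have hs : ∀ k, s (k + 1) ^ 2 ≤ s k := fun k => by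
    have hT : 2 * N ^ (1 - q) ≤ 2 * N * w (k + 1) := by
      rw [hw1, ← mul_assoc]
      gcongr
      exact monotone_rootSeq hx0 hx1 (by omega)
    have hrec_k := hrec _ hT
    rw [show (2 * N * w (k + 1)) ^ 2 / (2 * N) = 2 * N * w k by
      rw [← hw_sq k]; field_simp] at hrec_k
    calc s (k + 1) ^ 2 = upperMass a (2 * N * w (k + 1)) ^ 2 / (4 * N) / (4 * N) := by ring
      _ ≤ 4 * N * upperMass a (2 * N * w k) / (4 * N) / (4 * N) := by gcongr
      _ = s k := by simp only [s]; field_simp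
  have hs0 : s 0 ≤ rootSeq (N ^ γ) 0 := by
    rw [rootSeq_zero, div_le_iff₀ (by positivity)]
    calc upperMass a (2 * N * w 0) ≤ positiveMass a := sum_le_positiveMass _
      _ ≤ N ^ (1 + γ) := hpos
      _ = N ^ γ * N := by rw [Real.rpow_add hN0, Real.rpow_one, mul_comm]
      _ ≤ N ^ γ * (4 * N) := by gcongr; linarith
  have key := le_of_sq_succ_le (r := rootSeq (N ^ γ))
    (fun k => Real.rpow_nonneg (Real.rpow_nonneg hN0.le _) _)
    (fun k => (rootSeq_succ_sq (Real.rpow_nonneg hN0.le _) k).ge) hs hs0 k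
  rwa [div_le_iff₀ (by positivity), mul_comm _ (4 * N),
    rootSeq_rpow_eq_rootSeq_succ_rpow hN0 γ hq.ne'] at key

lemma mul_positiveMass_le {N γ q y : ℝ} (hN : 0 < N) (hq : 0 < q) (hγ : 0 ≤ γ)
    (hpos : positiveMass a ≤ N ^ (1 + γ)) (hy0 : 0 ≤ y) (hy : y ≤ N ^ (-q)) :
    2 * N * y * positiveMass a ≤ 2 * N ^ 2 * y ^ (1 - γ / q) :=
  calc 2 * N * y * positiveMass a ≤ 2 * N * y * (N * N ^ γ) := by
        rw [← Real.rpow_one_add' hN.le (by positivity)]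
        exact mul_le_mul_of_nonneg_left hpos (by positivity)
    _ = 2 * N ^ 2 * (y * N ^ γ) := by ring
    _ ≤ 2 * N ^ 2 * y ^ (1 - γ / q) := by
        gcongr
        exact mul_rpow_le_rpow_one_sub hN hq hγ hy0 hy

lemma mul_upperMass_rootSeq_le {N γ q z : ℝ} (hN : 1 ≤ N) (hq : 0 < q) (hγ : 0 ≤ γ)
    (hpos : positiveMass a ≤ N ^ (1 + γ)) (hrec : MassRecursion a N q) {k : ℕ} (hz : 0 < z)
    (hzw : z ≤ rootSeq (N ^ (-(2 * q))) (k + 1)) :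
    2 * N * z * upperMass a (2 * N * rootSeq (N ^ (-(2 * q))) k) ≤
      8 * N ^ 2 * z ^ (1 - γ / q) := by
  have hN0 : 0 < N := one_pos.trans_le hN
  calc 2 * N * z * upperMass a (2 * N * rootSeq (N ^ (-(2 * q))) k)
      ≤ 2 * N * z * (4 * N * rootSeq (N ^ (-(2 * q))) (k + 1) ^ (-(γ / q))) := by
        gcongr
        exact upperMass_rootSeq_le hN hq hpos hrec k
    _ ≤ 2 * N * z * (4 * N * z ^ (-(γ / q))) := by
        have := Real.rpow_le_rpow_of_nonpos (z := -(γ / q)) hz hzw (neg_nonpos.2 (by positivity))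
        exact mul_le_mul_of_nonneg_left (mul_le_mul_of_nonneg_left this (by positivity))
          (by positivity)
    _ = 8 * N ^ 2 * z ^ (1 - γ / q) := by
        rw [Real.rpow_sub hz, Real.rpow_one, Real.rpow_neg hz.le]
        field_simp
        ring

lemma sum_mul_upperMass_rootSeq_le {N γ q y : ℝ} (hN : 1 ≤ N) (hq : 0 < q) (hγ : 0 ≤ γ)
    (hγq : γ ≤ q) (hpos : positiveMass a ≤ N ^ (1 + γ)) (hrec : MassRecursion a N q) {K : ℕ}
    (hK : rootSeq (N ^ (-(2 * q))) K ≤ y) (hy : y ^ (1 - γ / q) ≤ 1 / 2) :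
    ∑ k ∈ range K, 2 * N * rootSeq (N ^ (-(2 * q))) (k + 1) *
        upperMass a (2 * N * rootSeq (N ^ (-(2 * q))) k) ≤
      16 * N ^ 2 * y ^ (1 - γ / q) := by
  have hx0 : 0 < N ^ (-(2 * q)) := Real.rpow_pos_of_pos (one_pos.trans_le hN) _
  set w := rootSeq (N ^ (-(2 * q)))
  have hw0 : ∀ k, 0 < w k := rootSeq_pos hx0
  have hε0 : 0 ≤ 1 - γ / q := by rw [sub_nonneg, div_le_one hq]; exact hγq
  have hwK : w K ^ (1 - γ / q) ≤ y ^ (1 - γ / q) := Real.rpow_le_rpow (hw0 K).le hK hε0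
  have hgeom := sum_range_le_two_mul (v := fun k => w k ^ (1 - γ / q))
    (fun k => (Real.rpow_pos_of_pos (hw0 k) _).le)
    (fun k => by rw [Real.rpow_pow_comm (hw0 _).le, rootSeq_succ_sq hx0.le]) (hwK.trans hy)
  calc ∑ k ∈ range K, 2 * N * w (k + 1) * upperMass a (2 * N * w k)
      ≤ ∑ k ∈ range K, 8 * N ^ 2 * w (k + 1) ^ (1 - γ / q) := sum_le_sum fun k _ =>
        mul_upperMass_rootSeq_le hN hq hγ hpos hrec (hw0 _) le_rfl
    _ = 8 * N ^ 2 * ∑ k ∈ range K, w (k + 1) ^ (1 - γ / q) := by rw [mul_sum]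
    _ ≤ 16 * N ^ 2 * y ^ (1 - γ / q) := by nlinarith

lemma sum_sq_le_of_rootSeq_le_lt {N γ q κ : ℝ} (hN : 1 ≤ N) (hγ : 0 < γ) (hγq : γ < q)
    (hpos : positiveMass a ≤ N ^ (1 + γ)) (hrec : MassRecursion a N q) {K : ℕ}
    (hK : rootSeq (N ^ (-(2 * q))) K ≤ κ / 2) (hK' : κ / 2 < rootSeq (N ^ (-(2 * q))) (K + 1))
    (hκ : (κ / 2) ^ (1 - γ / q) ≤ 1 / 2) :
    ∑ i ∈ univ.filter (fun i => 0 ≤ a i ∧ a i ≤ κ * N), a i ^ 2 ≤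
      26 * N ^ 2 * (κ / 2) ^ (1 - γ / q) := by
  have hN0 : 0 < N := one_pos.trans_le hN
  have hq : 0 < q := hγ.trans hγq
  set x := N ^ (-(2 * q))
  set w := rootSeq x
  have hx0 : 0 < x := Real.rpow_pos_of_pos hN0 _
  have hw : Monotone w :=
    monotone_rootSeq hx0.le (Real.rpow_le_one_of_one_le_of_nonpos hN (by linarith))
  have hw0 : ∀ k, 0 < w k := rootSeq_pos hx0
  have hxκ : x ≤ κ / 2 := (rootSeq_zero (x := x)).symm.trans_le ((hw K.zero_le).trans hK)
  have hε0 : 0 ≤ 1 - γ / q := by rw [sub_nonneg, div_le_one hq]; exact hγq.le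
  have htail : 2 * N * w 0 * positiveMass a ≤ 2 * N ^ 2 * (κ / 2) ^ (1 - γ / q) := by
    rw [show w 0 = x from rootSeq_zero]
    refine (mul_positiveMass_le hN0 hq hγ.le hpos hx0.le
      (Real.rpow_le_rpow_of_exponent_le hN (by linarith))).trans ?_
    gcongr
  have hbands := sum_mul_upperMass_rootSeq_le hN hq hγ.le hγq.le hpos hrec hK hκ
  have htop : κ * N * upperMass a (2 * N * w K) ≤ 8 * N ^ 2 * (κ / 2) ^ (1 - γ / q) := by
    have h := mul_upperMass_rootSeq_le hN hq hγ.le hpos hrec (hx0.trans_le hxκ) hK'.le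
    rwa [show 2 * N * (κ / 2) = κ * N by ring] at h
  have hdecomp := sum_sq_filter_Icc_le (a := a) (t := fun k => 2 * N * w k)
    (fun i j hij => mul_le_mul_of_nonneg_left (hw hij) (by positivity))
    (by have := hw0 0; positivity) (K := K) (c := κ * N) (by nlinarith)
  linarith

theorem sum_sq_le_of_massRecursion {N γ q κ : ℝ} (hN : 1 ≤ N) (hγ : 0 < γ) (hγq : γ < q)
    (hsq : ∑ i, a i ^ 2 ≤ N ^ 2) (hpos : positiveMass a ≤ N ^ (1 + γ))
    (hrec : MassRecursion a N q) (hκ : 0 ≤ κ) :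
    ∑ i ∈ univ.filter (fun i => 0 ≤ a i ∧ a i ≤ κ * N), a i ^ 2 ≤
      50 * κ ^ (1 - γ / q) * N ^ 2 := by
  have hN0 : 0 < N := one_pos.trans_le hN
  have hq : 0 < q := hγ.trans hγq
  have hε0 : 0 ≤ 1 - γ / q := by rw [sub_nonneg, div_le_one hq]; exact hγq.le
  have hhalf : (κ / 2) ^ (1 - γ / q) ≤ κ ^ (1 - γ / q) :=
    Real.rpow_le_rpow (by positivity) (by linarith) hε0
  have hκε : 0 ≤ (κ / 2) ^ (1 - γ / q) := by positivity
  rcases lt_or_ge (κ / 2) (N ^ (-(2 * q))) with htiny | hx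
  · have hxq : N ^ (-(2 * q)) ≤ N ^ (-q) := Real.rpow_le_rpow_of_exponent_le hN (by linarith)
    calc ∑ i ∈ univ.filter (fun i => 0 ≤ a i ∧ a i ≤ κ * N), a i ^ 2
        ≤ 2 * N * (κ / 2) * ∑ i ∈ univ.filter (fun i => 0 ≤ a i ∧ a i ≤ κ * N), a i :=
          sum_sq_le_mul_sum fun i hi =>
            ⟨(mem_filter.1 hi).2.1, by linarith [(mem_filter.1 hi).2.2]⟩
      _ ≤ 2 * N * (κ / 2) * positiveMass a := by gcongr; exact sum_le_positiveMass _
      _ ≤ 2 * N ^ 2 * (κ / 2) ^ (1 - γ / q) :=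
          mul_positiveMass_le hN0 hq hγ.le hpos (by positivity) (htiny.le.trans hxq)
      _ ≤ 50 * κ ^ (1 - γ / q) * N ^ 2 := by nlinarith
  rcases lt_or_ge (1 / 2) ((κ / 2) ^ (1 - γ / q)) with hbig | hsmall
  · calc ∑ i ∈ univ.filter (fun i => 0 ≤ a i ∧ a i ≤ κ * N), a i ^ 2 ≤ ∑ i, a i ^ 2 :=
          sum_le_sum_of_subset_of_nonneg (filter_subset _ _) fun _ _ _ => sq_nonneg _
      _ ≤ N ^ 2 := hsq
      _ ≤ 50 * κ ^ (1 - γ / q) * N ^ 2 := by nlinarith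
  have hκ1 : κ / 2 < 1 := by
    by_contra! h
    linarith [Real.one_le_rpow h hε0]
  obtain ⟨K, hK, hK'⟩ := exists_le_and_lt_succ (w := rootSeq (N ^ (-(2 * q))))
    (by rwa [rootSeq_zero]) (exists_lt_rootSeq (Real.rpow_pos_of_pos hN0 _) hκ1)
  calc ∑ i ∈ univ.filter (fun i => 0 ≤ a i ∧ a i ≤ κ * N), a i ^ 2
      ≤ 26 * N ^ 2 * (κ / 2) ^ (1 - γ / q) :=
        sum_sq_le_of_rootSeq_le_lt hN hγ hγq hpos hrec hK hK' hsmall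
    _ ≤ 50 * κ ^ (1 - γ / q) * N ^ 2 := by nlinarith

end

theorem second_moment_small_eigenvalues {n : ℕ} (G : SimpleGraph (Fin n))
    [DecidableRel G.Adj] (hA : (G.adjMatrix ℝ).IsHermitian)
    (γ q : ℝ) (hγ : 0 < γ) (hγq : γ < q)
    (hpos : (∑ i ∈ Finset.univ.filter fun i => 0 < hA.eigenvalues i, hA.eigenvalues i)
      ≤ (n : ℝ) ^ (1 + γ))
    (hrec : ∀ T : ℝ, 2 * (n : ℝ) ^ (1 - q) ≤ T →
      (∑ i ∈ Finset.univ.filter fun i => T ≤ hA.eigenvalues i, hA.eigenvalues i) ^ 2 ≤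
        4 * n * ∑ i ∈ Finset.univ.filter fun i => T ^ 2 / (2 * n) ≤ hA.eigenvalues i,
          hA.eigenvalues i)
    (κ : ℝ) (hκ0 : 0 ≤ κ) :
    (∑ i ∈ Finset.univ.filter fun i =>
        0 ≤ hA.eigenvalues i ∧ hA.eigenvalues i ≤ κ * n, (hA.eigenvalues i) ^ 2)
      ≤ 50 * κ ^ (1 - γ / q) * (n : ℝ) ^ 2 := by
  rcases Nat.eq_zero_or_pos n with rfl | hn
  · simp
  exact sum_sq_le_of_massRecursion (by exact_mod_cast hn) hγ hγq
    (by simpa using G.sum_eigenvalues_sq_le hA) hpos hrec hκ0
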